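/- arXiv:1711.00064 — 3 statements merged into one kernel-verified Lean document; each statement's English description precedes it below -/
import Mathlib

section
/- Let μ be a probability measure, p1, p0 nonnegative measurable functions, c₀ > 0, R(c₀) = {x : p1(x) ≥ c₀ p0(x)}, and suppose ∫_{R(c₀)} p0 dμ = α₀. Then for any measurable set S, ∫_{R(c₀)} p1 dμ − ∫_S p1 dμ ≥ c₀ · (α₀ − ∫_S p0 dμ). -/
open MeasureTheory

theorem stmt_3_general {X : Type*} [MeasurableSpace X] (μ : Measure X)
    (p1 p0 : X → ℝ) (hp1m : Measurable p1) (hp0m : Measurable p0)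
    (hp1i : Integrable p1 μ) (hp0i : Integrable p0 μ)
    (c₀ : ℝ) (α₀ : ℝ)
    (hR : ∫ x in {x | c₀ * p0 x ≤ p1 x}, p0 x ∂μ = α₀)
    (S : Set X) (hS : MeasurableSet S) :
    c₀ * (α₀ - ∫ x in S, p0 x ∂μ) ≤
      (∫ x in {x | c₀ * p0 x ≤ p1 x}, p1 x ∂μ) - ∫ x in S, p1 x ∂μ := by
  -- `R(c₀)` is where `p1 - c₀ p0` is nonnegative, so no set has a larger integral of it.
  have hS_le_R := setIntegral_le_nonneg hS (hp1m.sub (hp0m.const_mul c₀)).stronglyMeasurable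
    (hp1i.sub (hp0i.const_mul c₀))
  simp only [Pi.sub_apply, sub_nonneg] at hS_le_R
  rw [integral_sub hp1i.integrableOn (hp0i.const_mul c₀).integrableOn,
    integral_sub hp1i.integrableOn (hp0i.const_mul c₀).integrableOn,
    integral_const_mul, integral_const_mul, hR] at hS_le_R
  linarith

/-- Key inequality in the proof of Lemma 1: the `p1`-mass gap between the
threshold region `R(c₀)` and any region `S` is at least `c₀` times the
corresponding gap in `p0`-mass. -/
theorem stmt_3 {X : Type*} [MeasurableSpace X] (μ : Measure X) [IsProbabilityMeasure μ]
    (p1 p0 : X → ℝ) (hp1m : Measurable p1) (hp0m : Measurable p0)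
    (hp1 : ∀ x, 0 ≤ p1 x) (hp0 : ∀ x, 0 ≤ p0 x)
    (hp1i : Integrable p1 μ) (hp0i : Integrable p0 μ)
    (c₀ : ℝ) (hc₀ : 0 < c₀) (α₀ : ℝ)
    (hR : ∫ x in {x | c₀ * p0 x ≤ p1 x}, p0 x ∂μ = α₀)
    (S : Set X) (hS : MeasurableSet S) :
    c₀ * (α₀ - ∫ x in S, p0 x ∂μ) ≤
      (∫ x in {x | c₀ * p0 x ≤ p1 x}, p1 x ∂μ) - ∫ x in S, p1 x ∂μ :=
  stmt_3_general μ p1 p0 hp1m hp0m hp1i hp0i c₀ α₀ hR S hS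
end

section
/- Let G be a finite set of strata. For each g let μ_g^0 and μ_g^1 be probability measures on ℝ (distribution of the score f̂(X) given Y=0, G=g and Y=1, G=g respectively), with μ_g^1 absolutely continuous w.r.t. μ_g^0 with density h_g (the likelihood ratio). Let w_g^0, w_g^1 ≥ 0 be stratum weights with Σ w_g^0 = Σ w_g^1 = 1, and let o_g = w_g^1 / w_g^0 (assume w_g^0 > 0). Fix c₀ > 0 and define, for each g, the region S_g = {s ∈ ℝ : o_g · h_g(s) ≥ c₀}; suppose Σ_g w_g^0 μ_g^0(S_g) = α₀. Then for any family of measurable sets (T_g) with Σ_g w_g^0 μ_g^0(T_g) ≤ α₀, we have Σ_g w_g^1 μ_g^1(T_g) ≤ Σ_g w_g^1 μ_g^1(S_g). -/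
open MeasureTheory

/-! Each stratum is a Neyman–Pearson problem: writing `μ₁ = h • μ₀`, the quantity
`w₁ μ₁(A) - c₀ w₀ μ₀(A)` is the integral over `A` of `w₁ h - c₀ w₀`, and such an integral is
largest on the set where the integrand is nonnegative, which is exactly `S_g` since `o_g = w₁/w₀`.
Summing over the strata and using that `T` spends no more false-positive mass than `S`
(with weight `c₀ ≥ 0`) gives the claim. -/

section WithDensity

variable {α : Type*} [MeasurableSpace α] {μ ν : Measure α} {h : α → ℝ}

lemma toReal_withDensity_ofReal_apply (hm : Measurable h) (h0 : ∀ s, 0 ≤ h s)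
    {A : Set α} (hA : MeasurableSet A) :
    ((μ.withDensity fun s => ENNReal.ofReal (h s)) A).toReal = ∫ s in A, h s ∂μ := by
  rw [withDensity_apply _ hA,
    integral_eq_lintegral_of_nonneg_ae (.of_forall h0) hm.aestronglyMeasurable.restrict]

lemma integrable_of_isFiniteMeasure_withDensity_ofReal (hm : Measurable h) (h0 : ∀ s, 0 ≤ h s)
    [IsFiniteMeasure (μ.withDensity fun s => ENNReal.ofReal (h s))] : Integrable h μ := by
  refine ⟨hm.aestronglyMeasurable, ?_⟩
  rw [hasFiniteIntegral_iff_ofReal (.of_forall h0), ← setLIntegral_univ,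
    ← withDensity_apply _ .univ]
  exact measure_lt_top _ _

lemma mul_toReal_withDensity_sub_mul_toReal_eq_setIntegral [IsFiniteMeasure μ]
    (hm : Measurable h) (h0 : ∀ s, 0 ≤ h s)
    (hν : ν = μ.withDensity fun s => ENNReal.ofReal (h s)) [IsFiniteMeasure ν]
    (a b : ℝ) {A : Set α} (hA : MeasurableSet A) :
    a * (ν A).toReal - b * (μ A).toReal = ∫ s in A, (a * h s - b) ∂μ := by
  subst hν
  have hint := integrable_of_isFiniteMeasure_withDensity_ofReal hm h0 (μ := μ)
  rw [integral_sub (hint.const_mul a).integrableOn (integrable_const b).integrableOn,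
    integral_const_mul, integral_const, toReal_withDensity_ofReal_apply hm h0 hA,
    smul_eq_mul, measureReal_restrict_apply_univ, measureReal_def, mul_comm b]

theorem mul_toReal_sub_mul_toReal_le_of_withDensity [IsFiniteMeasure μ]
    (hm : Measurable h) (h0 : ∀ s, 0 ≤ h s)
    (hν : ν = μ.withDensity fun s => ENNReal.ofReal (h s)) [IsFiniteMeasure ν]
    (a b : ℝ) {T : Set α} (hT : MeasurableSet T) :
    a * (ν T).toReal - b * (μ T).toReal ≤
      a * (ν {s | b ≤ a * h s}).toReal - b * (μ {s | b ≤ a * h s}).toReal := by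
  have hmψ : Measurable fun s => a * h s - b := (hm.const_mul a).sub_const b
  have hS : {s | b ≤ a * h s} = {s | 0 ≤ a * h s - b} := by simp only [sub_nonneg]
  rw [hS, mul_toReal_withDensity_sub_mul_toReal_eq_setIntegral hm h0 hν a b hT,
    mul_toReal_withDensity_sub_mul_toReal_eq_setIntegral hm h0 hν a b
      (measurableSet_le measurable_const hmψ)]
  subst hν
  exact setIntegral_le_nonneg hT hmψ.stronglyMeasurable
    (((integrable_of_isFiniteMeasure_withDensity_ofReal hm h0).const_mul a).sub
      (integrable_const b))

end WithDensity

theorem stmt_8_general {G : Type*} [Fintype G]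
    (μ0 μ1 : G → Measure ℝ)
    (hprob0 : ∀ g, IsProbabilityMeasure (μ0 g))
    (hprob1 : ∀ g, IsProbabilityMeasure (μ1 g))
    (h : G → ℝ → ℝ) (hhm : ∀ g, Measurable (h g)) (hh0 : ∀ g s, 0 ≤ h g s)
    (hdens : ∀ g, μ1 g = (μ0 g).withDensity (fun s => ENNReal.ofReal (h g s)))
    (w0 w1 : G → ℝ) (hw0 : ∀ g, 0 < w0 g)
    (o : G → ℝ) (ho : ∀ g, o g = w1 g / w0 g)
    (c₀ : ℝ) (hc₀ : 0 < c₀) (α₀ : ℝ)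
    (hS : ∑ g, w0 g * ((μ0 g) {s | c₀ ≤ o g * h g s}).toReal = α₀)
    (T : G → Set ℝ) (hTm : ∀ g, MeasurableSet (T g))
    (hT : ∑ g, w0 g * ((μ0 g) (T g)).toReal ≤ α₀) :
    ∑ g, w1 g * ((μ1 g) (T g)).toReal ≤
      ∑ g, w1 g * ((μ1 g) {s | c₀ ≤ o g * h g s}).toReal := by
  have hregion : ∀ g, {s | c₀ ≤ o g * h g s} = {s | c₀ * w0 g ≤ w1 g * h g s} := fun g => by
    ext s
    simp only [Set.mem_ofPred_eq, ho, div_mul_eq_mul_div, le_div_iff₀ (hw0 g)]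
  have hstratum : ∀ g, w1 g * ((μ1 g) (T g)).toReal - c₀ * (w0 g * ((μ0 g) (T g)).toReal) ≤
      w1 g * ((μ1 g) {s | c₀ ≤ o g * h g s}).toReal -
        c₀ * (w0 g * ((μ0 g) {s | c₀ ≤ o g * h g s}).toReal) := fun g => by
    have := hprob0 g
    have := hprob1 g
    simpa only [hregion, mul_assoc] using
      mul_toReal_sub_mul_toReal_le_of_withDensity (hhm g) (hh0 g) (hdens g) (w1 g) (c₀ * w0 g)
        (hTm g)
  have hsum := Finset.sum_le_sum fun g (_ : g ∈ Finset.univ) => hstratum g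
  simp only [Finset.sum_sub_distrib, ← Finset.mul_sum, hS] at hsum
  linarith [mul_le_mul_of_nonneg_left hT hc₀.le]

/-- Lemma 2 / Theorem 2 optimality in the discrete-strata setting: thresholding
the calibrated ranking `r = o_g · h_g` at a common level `c₀` maximizes the
overall TPR subject to the overall FPR constraint. -/
theorem stmt_8 {G : Type*} [Fintype G]
    (μ0 μ1 : G → Measure ℝ)
    (hprob0 : ∀ g, IsProbabilityMeasure (μ0 g))
    (hprob1 : ∀ g, IsProbabilityMeasure (μ1 g))
    (h : G → ℝ → ℝ) (hhm : ∀ g, Measurable (h g)) (hh0 : ∀ g s, 0 ≤ h g s)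
    (hdens : ∀ g, μ1 g = (μ0 g).withDensity (fun s => ENNReal.ofReal (h g s)))
    (w0 w1 : G → ℝ) (hw0 : ∀ g, 0 < w0 g) (hw1 : ∀ g, 0 ≤ w1 g)
    (hw0sum : ∑ g, w0 g = 1) (hw1sum : ∑ g, w1 g = 1)
    (o : G → ℝ) (ho : ∀ g, o g = w1 g / w0 g)
    (c₀ : ℝ) (hc₀ : 0 < c₀) (α₀ : ℝ)
    (hS : ∑ g, w0 g * ((μ0 g) {s | c₀ ≤ o g * h g s}).toReal = α₀)
    (T : G → Set ℝ) (hTm : ∀ g, MeasurableSet (T g))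
    (hT : ∑ g, w0 g * ((μ0 g) (T g)).toReal ≤ α₀) :
    ∑ g, w1 g * ((μ1 g) (T g)).toReal ≤
      ∑ g, w1 g * ((μ1 g) {s | c₀ ≤ o g * h g s}).toReal :=
  stmt_8_general μ0 μ1 hprob0 hprob1 h hhm hh0 hdens w0 w1 hw0 o ho c₀ hc₀ α₀ hS T hTm hT
end

section
/- Let μ be a probability measure, p1, p0 : X → ℝ nonnegative integrable functions, and for a measurable ranking function r : X → ℝ define the achieved TPR at FPR budget α as T_r(α) = sup { ∫_S p1 dμ : S = {x : r(x) ≥ c} for some c, ∫_S p0 dμ ≤ α }. If r(x) = p1(x)/p0(x) μ-a.e. on {p0 > 0} (and r = ∞ convention on {p0 = 0, p1 > 0}), then for every measurable set S and every α with ∫_S p0 dμ ≤ α and such that some superlevel set R(c) of r has ∫_{R(c)} p0 dμ = α, we have ∫_S p1 dμ ≤ T_r(α). Moreover T_r is monotone nondecreasing in α. -/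
/-!
Neyman–Pearson. Let `R = {c ≤ r}` with `γ = c` finite. Off `R` we have `p1 ≤ γ p0`, on `R` we
have `γ p0 ≤ p1`, so `∫_S (p1 - γ p0) ≤ ∫_R (p1 - γ p0)` for every `S`; adding
`γ ∫_S p0 ≤ γ ∫_R p0` gives `∫_S p1 ≤ ∫_R p1`. For `c = ∞`, `p0` vanishes on `R`, so a set `S` with
`∫_S p0 ≤ ∫_R p0` carries no `p0`-mass, hence (`r < ∞` off `R`) no `p1`-mass outside `R` either,
and the same comparison works with `γ = 0`. Taking the supremum over thresholds gives the bound by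
`T α`; monotonicity holds because the candidate sets grow with `α` and consist of nonnegative
numbers, which also covers the empty candidate set, where `sSup ∅ = 0`.
-/

open MeasureTheory
open scoped ENNReal

lemma Real.sSup_le_sSup_of_subset_of_nonneg {s t : Set ℝ} (ht : BddAbove t)
    (ht0 : ∀ x ∈ t, 0 ≤ x) (h : s ⊆ t) : sSup s ≤ sSup t := by
  obtain rfl | hs := s.eq_empty_or_nonempty
  · exact Real.sSup_empty.trans_le (Real.sSup_nonneg ht0)
  · exact csSup_le_csSup ht hs h

namespace ENNReal

lemma toReal_mul_le_of_le_ofReal_div {a b : ℝ} (ha : 0 ≤ a) {c : ℝ≥0∞}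
    (hc : c ≠ ∞) (h : c ≤ ENNReal.ofReal a / ENNReal.ofReal b) : c.toReal * b ≤ a := by
  have h' := mul_le_of_le_div h
  rwa [← ofReal_toReal hc, ← ofReal_mul toReal_nonneg, ofReal_le_ofReal_iff ha] at h'

lemma le_toReal_mul_of_ofReal_div_lt {a b : ℝ} (hb : 0 ≤ b) {c : ℝ≥0∞} (hc : c ≠ ∞)
    (h : ENNReal.ofReal a / ENNReal.ofReal b < c) : a ≤ c.toReal * b := by
  rcases le_or_gt a 0 with ha | ha
  · exact ha.trans (mul_nonneg toReal_nonneg hb)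
  rw [ENNReal.div_lt_iff (Or.inr (ofReal_pos.mpr ha).ne') (Or.inl ofReal_ne_top),
    ← ofReal_toReal hc, ← ofReal_mul toReal_nonneg, ofReal_lt_ofReal_iff'] at h
  exact h.1.le

lemma eq_zero_of_ofReal_div_eq_top {a b : ℝ} (hb : 0 ≤ b)
    (h : ENNReal.ofReal a / ENNReal.ofReal b = ∞) : b = 0 := by
  rcases div_eq_top.mp h with ⟨-, hb0⟩ | ⟨ha, -⟩
  · exact le_antisymm (ofReal_eq_zero.mp hb0) hb
  · exact absurd ha ofReal_ne_top

lemma nonpos_of_ofReal_div_zero_ne_top {a : ℝ} (h : ENNReal.ofReal a / 0 ≠ ∞) : a ≤ 0 :=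
  ofReal_eq_zero.mp (by_contra fun ha => h (div_zero ha))

end ENNReal

section NeymanPearson

variable {X : Type*} [MeasurableSpace X] {μ : Measure X}

lemma setIntegral_le_setIntegral_of_nonpos_diff_of_nonneg_diff {h : X → ℝ} {S R : Set X}
    (hh : Integrable h μ) (hS : MeasurableSet S) (hR : MeasurableSet R)
    (hSR : ∀ᵐ x ∂μ, x ∈ S \ R → h x ≤ 0) (hRS : ∀ᵐ x ∂μ, x ∈ R \ S → 0 ≤ h x) :
    ∫ x in S, h x ∂μ ≤ ∫ x in R, h x ∂μ := by
  rw [← integral_inter_add_sdiff (s := S) hR hh.integrableOn,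
    ← integral_inter_add_sdiff (s := R) hS hh.integrableOn, Set.inter_comm R S]
  have h₁ := setIntegral_nonpos_ae (hS.diff hR) hSR
  have h₂ := setIntegral_nonneg_ae (hR.diff hS) hRS
  linarith

lemma setIntegral_le_setIntegral_of_likelihoodRatio {p1 p0 : X → ℝ} {S R : Set X} {γ : ℝ}
    (hp1i : Integrable p1 μ) (hp0i : Integrable p0 μ) (hS : MeasurableSet S)
    (hR : MeasurableSet R) (hγ : 0 ≤ γ)
    (hSR : ∀ᵐ x ∂μ, x ∈ S \ R → p1 x ≤ γ * p0 x) (hRS : ∀ᵐ x ∂μ, x ∈ R \ S → γ * p0 x ≤ p1 x)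
    (h0 : ∫ x in S, p0 x ∂μ ≤ ∫ x in R, p0 x ∂μ) :
    ∫ x in S, p1 x ∂μ ≤ ∫ x in R, p1 x ∂μ := by
  have hdiff : Integrable (fun x => p1 x - γ * p0 x) μ := hp1i.sub (hp0i.const_mul γ)
  have hsplit : ∀ A : Set X,
      ∫ x in A, p1 x ∂μ = ∫ x in A, (p1 x - γ * p0 x) ∂μ + γ * ∫ x in A, p0 x ∂μ := fun A => by
    rw [integral_sub hp1i.integrableOn (hp0i.const_mul γ).integrableOn, integral_const_mul]
    ring
  have hcompare := setIntegral_le_setIntegral_of_nonpos_diff_of_nonneg_diff hdiff hS hR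
    (hSR.mono fun x hx hxSR => sub_nonpos.mpr (hx hxSR))
    (hRS.mono fun x hx hxRS => sub_nonneg.mpr (hx hxRS))
  rw [hsplit S, hsplit R]
  exact add_le_add hcompare (mul_le_mul_of_nonneg_left h0 hγ)

variable {p1 p0 : X → ℝ} {r : X → ℝ≥0∞}

lemma setIntegral_le_setIntegral_superlevel_of_ne_top (hp1 : ∀ x, 0 ≤ p1 x)
    (hp0 : ∀ x, 0 ≤ p0 x) (hp1i : Integrable p1 μ) (hp0i : Integrable p0 μ) (hrm : Measurable r)
    (hr : ∀ᵐ x ∂μ, r x = ENNReal.ofReal (p1 x) / ENNReal.ofReal (p0 x))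
    {c : ℝ≥0∞} (hc : c ≠ ∞) {S : Set X} (hS : MeasurableSet S)
    (h0 : ∫ x in S, p0 x ∂μ ≤ ∫ x in {x | c ≤ r x}, p0 x ∂μ) :
    ∫ x in S, p1 x ∂μ ≤ ∫ x in {x | c ≤ r x}, p1 x ∂μ := by
  refine setIntegral_le_setIntegral_of_likelihoodRatio (γ := c.toReal) hp1i hp0i hS
    (hrm measurableSet_Ici) ENNReal.toReal_nonneg ?_ ?_ h0
  · filter_upwards [hr] with x hx hxSR
    exact ENNReal.le_toReal_mul_of_ofReal_div_lt (hp0 x) hc (hx ▸ not_le.mp hxSR.2)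
  · filter_upwards [hr] with x hx hxRS
    exact ENNReal.toReal_mul_le_of_le_ofReal_div (hp1 x) hc (hx ▸ hxRS.1)

lemma setIntegral_le_setIntegral_superlevel_top (hp1 : ∀ x, 0 ≤ p1 x)
    (hp0 : ∀ x, 0 ≤ p0 x) (hp1i : Integrable p1 μ) (hp0i : Integrable p0 μ) (hrm : Measurable r)
    (hr : ∀ᵐ x ∂μ, r x = ENNReal.ofReal (p1 x) / ENNReal.ofReal (p0 x))
    {S : Set X} (hS : MeasurableSet S)
    (h0 : ∫ x in S, p0 x ∂μ ≤ ∫ x in {x | ∞ ≤ r x}, p0 x ∂μ) :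
    ∫ x in S, p1 x ∂μ ≤ ∫ x in {x | ∞ ≤ r x}, p1 x ∂μ := by
  have hR : MeasurableSet {x | ∞ ≤ r x} := hrm measurableSet_Ici
  have hR0 : ∀ᵐ x ∂μ, x ∈ {x | ∞ ≤ r x} → p0 x ≤ 0 := by
    filter_upwards [hr] with x hx hxR
    exact (ENNReal.eq_zero_of_ofReal_div_eq_top (hp0 x) (hx ▸ top_le_iff.mp hxR)).le
  have hS0 : ∀ᵐ x ∂μ, x ∈ S → p0 x = 0 := by
    have hint : ∫ x in S, p0 x ∂μ = 0 :=
      le_antisymm (h0.trans (setIntegral_nonpos_ae hR hR0)) (setIntegral_nonneg hS fun x _ => hp0 x)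
    exact (ae_restrict_iff' hS).mp
      ((setIntegral_eq_zero_iff_of_nonneg_ae (ae_of_all _ hp0) hp0i.integrableOn).mp hint)
  refine setIntegral_le_setIntegral_of_likelihoodRatio (γ := 0) hp1i hp0i hS hR le_rfl ?_
    (ae_of_all _ fun x _ => (zero_mul (p0 x)).trans_le (hp1 x)) h0
  filter_upwards [hr, hS0] with x hx hx0 hxSR
  have hfin : r x ≠ ∞ := fun h => hxSR.2 h.ge
  rw [hx, hx0 hxSR.1, ENNReal.ofReal_zero] at hfin
  exact (ENNReal.nonpos_of_ofReal_div_zero_ne_top hfin).trans (zero_mul (p0 x)).ge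

lemma setIntegral_le_setIntegral_superlevel (hp1 : ∀ x, 0 ≤ p1 x)
    (hp0 : ∀ x, 0 ≤ p0 x) (hp1i : Integrable p1 μ) (hp0i : Integrable p0 μ) (hrm : Measurable r)
    (hr : ∀ᵐ x ∂μ, r x = ENNReal.ofReal (p1 x) / ENNReal.ofReal (p0 x))
    (c : ℝ≥0∞) {S : Set X} (hS : MeasurableSet S)
    (h0 : ∫ x in S, p0 x ∂μ ≤ ∫ x in {x | c ≤ r x}, p0 x ∂μ) :
    ∫ x in S, p1 x ∂μ ≤ ∫ x in {x | c ≤ r x}, p1 x ∂μ := by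
  obtain rfl | hc := eq_or_ne c ∞
  · exact setIntegral_le_setIntegral_superlevel_top hp1 hp0 hp1i hp0i hrm hr hS h0
  · exact setIntegral_le_setIntegral_superlevel_of_ne_top hp1 hp0 hp1i hp0i hrm hr hc hS h0

end NeymanPearson

theorem stmt_11_general {X : Type*} [MeasurableSpace X] (μ : Measure X)
    (p1 p0 : X → ℝ)
    (hp1 : ∀ x, 0 ≤ p1 x) (hp0 : ∀ x, 0 ≤ p0 x)
    (hp1i : Integrable p1 μ) (hp0i : Integrable p0 μ)
    (r : X → ℝ≥0∞) (hrm : Measurable r)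
    (hr : ∀ᵐ x ∂μ, r x = ENNReal.ofReal (p1 x) / ENNReal.ofReal (p0 x))
    (T : ℝ → ℝ)
    (hT : ∀ α : ℝ, T α = sSup {t : ℝ | ∃ c : ℝ≥0∞,
      (∫ x in {x | c ≤ r x}, p0 x ∂μ) ≤ α ∧ t = ∫ x in {x | c ≤ r x}, p1 x ∂μ}) :
    (∀ (α : ℝ) (S : Set X), MeasurableSet S → (∫ x in S, p0 x ∂μ) ≤ α →
      (∃ c : ℝ≥0∞, ∫ x in {x | c ≤ r x}, p0 x ∂μ = α) →
      ∫ x in S, p1 x ∂μ ≤ T α) ∧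
    Monotone T := by
  have hbdd : ∀ α : ℝ, BddAbove {t : ℝ | ∃ c : ℝ≥0∞,
      (∫ x in {x | c ≤ r x}, p0 x ∂μ) ≤ α ∧ t = ∫ x in {x | c ≤ r x}, p1 x ∂μ} := fun α =>
    ⟨∫ x, p1 x ∂μ, by
      rintro t ⟨c, -, rfl⟩
      exact setIntegral_le_integral hp1i (ae_of_all _ hp1)⟩
  refine ⟨fun α S hS hSα ⟨c, hc⟩ => ?_, fun a b hab => ?_⟩
  · calc ∫ x in S, p1 x ∂μ ≤ ∫ x in {x | c ≤ r x}, p1 x ∂μ :=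
          setIntegral_le_setIntegral_superlevel hp1 hp0 hp1i hp0i hrm hr c hS (hSα.trans hc.ge)
      _ ≤ T α := hT α ▸ le_csSup (hbdd α) ⟨c, hc.le, rfl⟩
  · rw [hT a, hT b]
    refine Real.sSup_le_sSup_of_subset_of_nonneg (hbdd b) ?_ ?_
    · rintro t ⟨c, -, rfl⟩
      exact setIntegral_nonneg (hrm measurableSet_Ici) fun x _ => hp1 x
    · rintro t ⟨c, hc, rfl⟩
      exact ⟨c, hc.trans hab, rfl⟩

/-- ROC functional formulation of Theorem 1: with the odds-ratio ranking
`r = p1/p0` (valued in `ℝ≥0∞`, so that `r = ∞` on `{p0 = 0, p1 > 0}`), the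
achievable TPR `T_r(α)` by thresholding `r` dominates every measurable decision
region at every achievable FPR level, and `T_r` is monotone nondecreasing. -/
theorem stmt_11 {X : Type*} [MeasurableSpace X] (μ : Measure X) [IsProbabilityMeasure μ]
    (p1 p0 : X → ℝ) (hp1m : Measurable p1) (hp0m : Measurable p0)
    (hp1 : ∀ x, 0 ≤ p1 x) (hp0 : ∀ x, 0 ≤ p0 x)
    (hp1i : Integrable p1 μ) (hp0i : Integrable p0 μ)
    (r : X → ℝ≥0∞) (hrm : Measurable r)
    (hr : ∀ᵐ x ∂μ, r x = ENNReal.ofReal (p1 x) / ENNReal.ofReal (p0 x))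
    (T : ℝ → ℝ)
    (hT : ∀ α : ℝ, T α = sSup {t : ℝ | ∃ c : ℝ≥0∞,
      (∫ x in {x | c ≤ r x}, p0 x ∂μ) ≤ α ∧ t = ∫ x in {x | c ≤ r x}, p1 x ∂μ}) :
    (∀ (α : ℝ) (S : Set X), MeasurableSet S → (∫ x in S, p0 x ∂μ) ≤ α →
      (∃ c : ℝ≥0∞, ∫ x in {x | c ≤ r x}, p0 x ∂μ = α) →
      ∫ x in S, p1 x ∂μ ≤ T α) ∧
    Monotone T :=
  stmt_11_general μ p1 p0 hp1 hp0 hp1i hp0i r hrm hr T hT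
end
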